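/- arXiv:2406.10919 — 2 statements merged into one kernel-verified Lean document; each statement's English description precedes it below -/
import Mathlib

section
/- Let α > 1 be a real number and let T : (0,1] → (0,1] be the map defined by T(x) = (α^d x − 1)/(α − 1) for x ∈ (α^{-d}, α^{-(d-1)}] (d a positive integer). Then for every sequence (d_i)_{i≥1} of positive integers, T(⟨d_1, d_2, d_3, …⟩_α) = ⟨d_2, d_3, d_4, …⟩_α; equivalently, T ∘ π = π ∘ σ where σ is the left shift on sequences. Consequently, for x = ⟨d_i⟩_α and a positive integer d, one has d_j = d if and only if T^{j-1}(x) ∈ (α^{-d}, α^{-(d-1)}]. -/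
/-!
Writing `x = ⟨d_1, d_2, …⟩_α` and `y = ⟨d_2, d_3, …⟩_α`, splitting off the first term of the
series gives `x = α^{-d_1} (1 + (α - 1) y)`. Since the digits are at least 1, comparing with the
geometric series `∑ (α - 1)^i α^{-(i+1)} = 1` gives `0 < y ≤ 1`, so `x` lies in the `d_1`-th
interval `(α^{-d_1}, α^{-d_1+1}]`, on which `T` inverts the affine relation: `T x = y`.
Iterating, `T^j x = ⟨d_{j+1}, …⟩_α` lies in the `d_{j+1}`-th interval, and these intervals are
pairwise disjoint.
-/

/-- The α-expansion value ⟨d_i⟩_α = ∑_{i=1}^∞ (α-1)^{i-1} α^{-(d_1+⋯+d_i)},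
with the digit sequence `d : ℕ → ℕ` indexed from 0 (so `d 0` is the first digit). -/
noncomputable def alphaExpansion (α : ℝ) (d : ℕ → ℕ) : ℝ :=
  ∑' i : ℕ, (α - 1) ^ i * α ^ (-((∑ j ∈ Finset.range (i + 1), d j : ℕ) : ℤ))

open Set

theorem zpow_eq_of_mem_Ioc_of_mem_Ioc {K : Type*} [Field K] [LinearOrder K]
    [IsStrictOrderedRing K] {α x : K} {m n : ℤ} (hα : 1 < α)
    (hm : x ∈ Ioc (α ^ m) (α ^ (m + 1))) (hn : x ∈ Ioc (α ^ n) (α ^ (n + 1))) : m = n := by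
  have hmn : m < n + 1 := (zpow_lt_zpow_iff_right₀ hα).1 (hm.1.trans_le hn.2)
  have hnm : n < m + 1 := (zpow_lt_zpow_iff_right₀ hα).1 (hn.1.trans_le hm.2)
  omega

section

variable {α : ℝ}

noncomputable def alphaExpansionTerm (α : ℝ) (d : ℕ → ℕ) (i : ℕ) : ℝ :=
  (α - 1) ^ i * α ^ (-((∑ j ∈ Finset.range (i + 1), d j : ℕ) : ℤ))

theorem alphaExpansion_eq_tsum (d : ℕ → ℕ) :
    alphaExpansion α d = ∑' i, alphaExpansionTerm α d i :=
  rfl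

theorem alphaExpansionTerm_nonneg (hα : 1 ≤ α) (d : ℕ → ℕ) (i : ℕ) :
    0 ≤ alphaExpansionTerm α d i := by
  have : 0 ≤ α - 1 := by linarith
  unfold alphaExpansionTerm
  positivity

theorem alphaExpansionTerm_le (hα : 1 ≤ α) {d : ℕ → ℕ} (hd : ∀ i, 1 ≤ d i) (i : ℕ) :
    alphaExpansionTerm α d i ≤ α⁻¹ * ((α - 1) / α) ^ i := by
  have hα₀ : 0 < α := by linarith
  have hsum : i + 1 ≤ ∑ j ∈ Finset.range (i + 1), d j := by
    simpa using Finset.card_nsmul_le_sum (Finset.range (i + 1)) d 1 fun j _ => hd j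
  calc alphaExpansionTerm α d i
      ≤ (α - 1) ^ i * α ^ (-((i + 1 : ℕ) : ℤ)) := by
        unfold alphaExpansionTerm
        gcongr
    _ = α⁻¹ * ((α - 1) / α) ^ i := by
        rw [zpow_neg, zpow_natCast, div_pow, pow_succ]
        field_simp

theorem hasSum_inv_mul_geometric (hα : 1 < α) :
    HasSum (fun i : ℕ => α⁻¹ * ((α - 1) / α) ^ i) 1 := by
  have hα₀ : 0 < α := by linarith
  have h := (hasSum_geometric_of_lt_one (r := (α - 1) / α) (by positivity)
    (by rw [div_lt_one hα₀]; linarith)).mul_left α⁻¹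
  rwa [one_sub_div hα₀.ne', sub_sub_cancel, one_div, inv_inv, inv_mul_cancel₀ hα₀.ne'] at h

theorem summable_alphaExpansionTerm (hα : 1 < α) {d : ℕ → ℕ} (hd : ∀ i, 1 ≤ d i) :
    Summable (alphaExpansionTerm α d) :=
  .of_nonneg_of_le (alphaExpansionTerm_nonneg hα.le d) (alphaExpansionTerm_le hα.le hd)
    (hasSum_inv_mul_geometric hα).summable

theorem alphaExpansion_nonneg (hα : 1 ≤ α) (d : ℕ → ℕ) : 0 ≤ alphaExpansion α d :=
  tsum_nonneg (alphaExpansionTerm_nonneg hα d)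

theorem alphaExpansion_le_one (hα : 1 < α) {d : ℕ → ℕ} (hd : ∀ i, 1 ≤ d i) :
    alphaExpansion α d ≤ 1 :=
  hasSum_le (alphaExpansionTerm_le hα.le hd) (summable_alphaExpansionTerm hα hd).hasSum
    (hasSum_inv_mul_geometric hα)

theorem alphaExpansionTerm_succ (hα : α ≠ 0) (d : ℕ → ℕ) (i : ℕ) :
    alphaExpansionTerm α d (i + 1) =
      α ^ (-(d 0 : ℤ)) * (α - 1) * alphaExpansionTerm α (fun i => d (i + 1)) i := by
  simp only [alphaExpansionTerm, Finset.sum_range_succ' d (i + 1), Nat.cast_add, neg_add,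
    zpow_add₀ hα, pow_succ]
  ring

theorem alphaExpansion_eq_zpow_mul (hα : 1 < α) {d : ℕ → ℕ} (hd : ∀ i, 1 ≤ d i) :
    alphaExpansion α d =
      α ^ (-(d 0 : ℤ)) * (1 + (α - 1) * alphaExpansion α (fun i => d (i + 1))) := by
  rw [alphaExpansion_eq_tsum, (summable_alphaExpansionTerm hα hd).tsum_eq_zero_add]
  simp only [alphaExpansionTerm_succ (by positivity : α ≠ 0), tsum_mul_left,
    ← alphaExpansion_eq_tsum]
  simp only [alphaExpansionTerm, pow_zero, zero_add, Finset.range_one, Finset.sum_singleton,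
    one_mul]
  ring

theorem alphaExpansion_pos (hα : 1 < α) {d : ℕ → ℕ} (hd : ∀ i, 1 ≤ d i) :
    0 < alphaExpansion α d := by
  have := alphaExpansion_nonneg hα.le (fun i => d (i + 1))
  have : 0 < α - 1 := by linarith
  rw [alphaExpansion_eq_zpow_mul hα hd]
  positivity

theorem alphaExpansion_mem_Ioc (hα : 1 < α) {d : ℕ → ℕ} (hd : ∀ i, 1 ≤ d i) :
    alphaExpansion α d ∈ Ioc (α ^ (-(d 0 : ℤ))) (α ^ (-(d 0 : ℤ) + 1)) := by
  have hshift : ∀ i, 1 ≤ d (i + 1) := fun i => hd (i + 1)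
  have hy₀ := alphaExpansion_pos hα hshift
  have hy₁ := alphaExpansion_le_one hα hshift
  set y := alphaExpansion α fun i => d (i + 1)
  have hpow : 0 < α ^ (-(d 0 : ℤ)) := by positivity
  rw [alphaExpansion_eq_zpow_mul hα hd, zpow_add_one₀ (by positivity)]
  constructor
  · have : 0 < (α - 1) * y := mul_pos (by linarith) hy₀
    nlinarith
  · have : (α - 1) * y ≤ α - 1 := mul_le_of_le_one_right (by linarith) hy₁
    nlinarith

def IsAlphaShiftMap (α : ℝ) (T : ℝ → ℝ) : Prop :=
  ∀ e : ℕ, 1 ≤ e → ∀ x ∈ Ioc (α ^ (-(e : ℤ))) (α ^ (-(e : ℤ) + 1)),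
    T x = (α ^ (e : ℤ) * x - 1) / (α - 1)

theorem IsAlphaShiftMap.apply_alphaExpansion {T : ℝ → ℝ} (hT : IsAlphaShiftMap α T)
    (hα : 1 < α) {d : ℕ → ℕ} (hd : ∀ i, 1 ≤ d i) :
    T (alphaExpansion α d) = alphaExpansion α (fun i => d (i + 1)) := by
  have hα₀ : α ≠ 0 := by positivity
  have hα₁ : α - 1 ≠ 0 := by linarith
  rw [hT (d 0) (hd 0) _ (alphaExpansion_mem_Ioc hα hd), alphaExpansion_eq_zpow_mul hα hd,
    ← mul_assoc, ← zpow_add₀ hα₀, add_neg_cancel, zpow_zero, one_mul, add_sub_cancel_left,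
    mul_div_cancel_left₀ _ hα₁]

theorem IsAlphaShiftMap.iterate_alphaExpansion {T : ℝ → ℝ} (hT : IsAlphaShiftMap α T)
    (hα : 1 < α) (j : ℕ) {d : ℕ → ℕ} (hd : ∀ i, 1 ≤ d i) :
    T^[j] (alphaExpansion α d) = alphaExpansion α (fun i => d (i + j)) := by
  induction j generalizing d with
  | zero => rfl
  | succ j ih =>
    rw [Function.iterate_succ_apply, hT.apply_alphaExpansion hα hd,
      ih fun i => hd (i + 1)]
    simp only [add_assoc]

end

theorem shift_map_conjugation (α : ℝ) (hα : 1 < α) (T : ℝ → ℝ)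
    (hT : ∀ e : ℕ, 1 ≤ e →
      ∀ x ∈ Set.Ioc (α ^ (-(e : ℤ))) (α ^ (-(e : ℤ) + 1)),
        T x = (α ^ (e : ℤ) * x - 1) / (α - 1)) :
    ∀ d : ℕ → ℕ, (∀ i, 1 ≤ d i) →
      T (alphaExpansion α d) = alphaExpansion α (fun i => d (i + 1)) ∧
      ∀ j e : ℕ, 1 ≤ e →
        (d j = e ↔
          T^[j] (alphaExpansion α d) ∈ Set.Ioc (α ^ (-(e : ℤ))) (α ^ (-(e : ℤ) + 1))) := by
  intro d hd
  have hT : IsAlphaShiftMap α T := hT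
  refine ⟨hT.apply_alphaExpansion hα hd, fun j e _ => ?_⟩
  have hmem := alphaExpansion_mem_Ioc hα (d := fun i => d (i + j)) fun i => hd (i + j)
  rw [hT.iterate_alphaExpansion hα j hd]
  simp only [zero_add] at hmem
  constructor
  · rintro rfl
    exact hmem
  · intro he
    exact_mod_cast neg_inj.1 (zpow_eq_of_mem_Ioc_of_mem_Ioc hα hmem he)
end

section
/- Let α > 1 be a real number. For Lebesgue-almost all x ∈ (0,1], writing x = ⟨d_i⟩_α for its α-expansion, the asymptotic geometric mean of the digits satisfies lim_{n→∞} (d_1 d_2 ⋯ d_n)^{1/n} = ∏_{d=1}^∞ d^{(α−1)/α^d}; equivalently, lim_{n→∞} (1/n)∑_{i=1}^n log d_i = ∑_{d=1}^∞ (α−1) α^{-d} log d. -/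
/-!
The first digit of `x ∈ (0, 1]` is the unique `k` with `1 < α ^ k x ≤ α`, and the expansion of
`x` continues with that of `T x = (α ^ k x - 1) / (α - 1)`. On the cylinder `{first digit = k}` the map
`T` is affine onto `(0, 1]` with slope `α ^ k / (α - 1)`, so for Lebesgue measure `μ` on `(0, 1]`,
`μ {first digit = k, T x ∈ A} = (α - 1) α⁻ᵏ μ A`: `T` preserves `μ` and the first digit is
independent of `T`. The digits `d_n = d_1 ∘ T^(n-1)` are therefore pairwise independent and
identically distributed with `P (d = k) = (α - 1) α⁻ᵏ`, and Etemadi's strong law of large numbers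
for `log d_n` gives the mean of the logarithms; the geometric mean is its exponential.
-/

open MeasureTheory Filter

open Set

lemma Real.volume_preimage_mul_add {a : ℝ} (ha : a ≠ 0) (b : ℝ) (s : Set ℝ) :
    volume ((fun x ↦ a * x + b) ⁻¹' s) = ENNReal.ofReal |a⁻¹| * volume s := by
  change volume ((a * ·) ⁻¹' ((· + b) ⁻¹' s)) = _
  rw [Real.volume_preimage_mul_left ha, measure_preimage_add_right]

lemma ProbabilityTheory.IndepFun.comp_measurePreserving {Ω Ω' β γ : Type*} [MeasurableSpace Ω]
    [MeasurableSpace Ω'] [MeasurableSpace β] [MeasurableSpace γ] {μ : Measure Ω} {ν : Measure Ω'}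
    {f : Ω → β} {g : Ω → γ} {φ : Ω' → Ω} (h : IndepFun f g μ) (hφ : MeasurePreserving φ ν μ)
    (hf : Measurable f) (hg : Measurable g) : IndepFun (f ∘ φ) (g ∘ φ) ν := by
  rw [ProbabilityTheory.indepFun_iff_measure_inter_preimage_eq_mul] at h ⊢
  intro s t hs ht
  simp only [preimage_comp, ← preimage_inter]
  rw [hφ.measure_preimage ((hf hs).inter (hg ht)).nullMeasurableSet,
    hφ.measure_preimage (hf hs).nullMeasurableSet, hφ.measure_preimage (hg ht).nullMeasurableSet,
    h s t hs ht]

lemma Real.prod_rpow_one_div_eq_exp {ι : Type*} (s : Finset ι) {f : ι → ℝ}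
    (hf : ∀ i ∈ s, 0 < f i) (c : ℝ) :
    (∏ i ∈ s, f i) ^ (1 / c) = Real.exp ((∑ i ∈ s, Real.log (f i)) / c) := by
  rw [Real.rpow_def_of_pos (Finset.prod_pos hf), Real.log_prod fun i hi ↦ (hf i hi).ne',
    mul_one_div]

instance : IsProbabilityMeasure (volume.restrict (Ioc (0 : ℝ) 1)) := ⟨by simp⟩

namespace AlphaExpansion

variable {α : ℝ}

/-- For `x ∈ (0, 1]`, the unique `k` with `α⁻ᵏ < x ≤ α¹⁻ᵏ`. -/
noncomputable def firstDigit (α x : ℝ) : ℕ := ⌊-Real.logb α x⌋₊ + 1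

noncomputable def shift (α x : ℝ) : ℝ := (x * α ^ firstDigit α x - 1) / (α - 1)

noncomputable def digit (α : ℝ) (n : ℕ) (x : ℝ) : ℕ := firstDigit α ((shift α)^[n] x)

lemma sub_one_div_mem_Ioc_iff (hα : 1 < α) {y : ℝ} :
    (y - 1) / (α - 1) ∈ Ioc 0 1 ↔ y ∈ Ioc 1 α := by
  have hα' : 0 < α - 1 := sub_pos.2 hα
  rw [mem_Ioc, mem_Ioc, div_pos_iff_of_pos_right hα', div_le_one hα']
  constructor <;> rintro ⟨h₀, h₁⟩ <;> constructor <;> linarith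

lemma mul_pow_firstDigit_mem_Ioc (hα : 1 < α) {x : ℝ} (hx : x ∈ Ioc 0 1) :
    x * α ^ firstDigit α x ∈ Ioc 1 α := by
  set t := Real.logb α x
  have ht : 0 ≤ -t := neg_nonneg.2 (Real.logb_nonpos hα hx.1.le hx.2)
  have hpow : x * α ^ firstDigit α x = α ^ (t + (⌊-t⌋₊ + 1 : ℕ)) := by
    rw [Real.rpow_add (by linarith), Real.rpow_natCast, Real.rpow_logb (by linarith) hα.ne' hx.1]
    rfl
  rw [hpow]
  push_cast
  refine ⟨Real.one_lt_rpow hα ?_, ?_⟩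
  · linarith [Nat.lt_floor_add_one (-t)]
  · conv_rhs => rw [← Real.rpow_one α]
    exact Real.rpow_le_rpow_of_exponent_le hα.le (by linarith [Nat.floor_le ht])

lemma eq_of_mul_pow_mem_Ioc (hα : 1 < α) {x : ℝ} {k m : ℕ} (hk : x * α ^ k ∈ Ioc 1 α)
    (hm : x * α ^ m ∈ Ioc 1 α) : k = m := by
  have hx : 0 < x := pos_of_mul_pos_left (one_pos.trans hk.1) (by positivity)
  have key : ∀ {i j : ℕ}, x * α ^ i ∈ Ioc 1 α → x * α ^ j ∈ Ioc 1 α → ¬ i < j := by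
    intro i j hi hj hij
    have : x * α ^ i * α ≤ x * α ^ j := by
      rw [mul_assoc, ← pow_succ]
      exact mul_le_mul_of_nonneg_left (pow_le_pow_right₀ hα.le hij) hx.le
    nlinarith [hi.1, hj.2]
  exact le_antisymm (not_lt.1 (key hm hk)) (not_lt.1 (key hk hm))

lemma firstDigit_eq_of_mul_pow_mem_Ioc (hα : 1 < α) {x : ℝ} {k : ℕ} (hx : x ≤ 1)
    (hk : x * α ^ k ∈ Ioc 1 α) : firstDigit α x = k :=
  have hx₀ : 0 < x := pos_of_mul_pos_left (one_pos.trans hk.1) (by positivity)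
  eq_of_mul_pow_mem_Ioc hα (mul_pow_firstDigit_mem_Ioc hα ⟨hx₀, hx⟩) hk

lemma shift_mem_Ioc (hα : 1 < α) {x : ℝ} (hx : x ∈ Ioc 0 1) : shift α x ∈ Ioc 0 1 :=
  (sub_one_div_mem_Ioc_iff hα).2 (mul_pow_firstDigit_mem_Ioc hα hx)

lemma one_le_firstDigit (x : ℝ) : 1 ≤ firstDigit α x := Nat.le_add_left 1 _

@[fun_prop]
lemma measurable_firstDigit : Measurable (firstDigit α) :=
  ((Real.measurable_log.div_const _).neg.nat_floor).add_const 1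

@[fun_prop]
lemma measurable_shift : Measurable (shift α) := by
  unfold shift
  fun_prop

section Expansion

open Finset in
lemma alphaExpansion_eq_tsum (d : ℕ → ℕ) :
    alphaExpansion α d = ∑' i, (α - 1) ^ i / α ^ (∑ j ∈ range (i + 1), d j) := by
  simp only [alphaExpansion, zpow_neg, zpow_natCast, div_eq_mul_inv]

variable {d : ℕ → ℕ}

lemma hasSum_geometric_sub_one_div_self (hα : 1 < α) :
    HasSum (fun i : ℕ ↦ ((α - 1) / α) ^ i / α) 1 := by
  have hα₀ : 0 < α := by positivity
  have h := (hasSum_geometric_of_lt_one (by positivity)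
    ((div_lt_one hα₀).2 (sub_lt_self α one_pos))).div_const α
  rwa [one_sub_div hα₀.ne', sub_sub_cancel, inv_div, div_one, div_self hα₀.ne'] at h

open Finset in
lemma alphaExpansion_term_le (hα : 1 < α) (hd : ∀ i, 1 ≤ d i) (i : ℕ) :
    (α - 1) ^ i / α ^ (∑ j ∈ range (i + 1), d j) ≤ ((α - 1) / α) ^ i / α := by
  have hS : i + 1 ≤ ∑ j ∈ range (i + 1), d j := by
    simpa using card_nsmul_le_sum (range (i + 1)) d 1 fun j _ ↦ hd j
  rw [div_pow, div_div, ← pow_succ]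
  exact div_le_div_of_nonneg_left (pow_nonneg (by linarith) _) (by positivity)
    (pow_le_pow_right₀ hα.le hS)

open Finset in
lemma summable_alphaExpansion_terms (hα : 1 < α) (hd : ∀ i, 1 ≤ d i) :
    Summable fun i ↦ (α - 1) ^ i / α ^ (∑ j ∈ range (i + 1), d j) :=
  (hasSum_geometric_sub_one_div_self hα).summable.of_nonneg_of_le
    (fun i ↦ div_nonneg (pow_nonneg (by linarith) _) (by positivity))
    (alphaExpansion_term_le hα hd)

lemma alphaExpansion_mem_Ioc (hα : 1 < α) (hd : ∀ i, 1 ≤ d i) :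
    alphaExpansion α d ∈ Ioc 0 1 := by
  have hα₁ : 0 < α - 1 := sub_pos.2 hα
  have hgeom := hasSum_geometric_sub_one_div_self hα
  rw [alphaExpansion_eq_tsum]
  exact ⟨(summable_alphaExpansion_terms hα hd).tsum_pos (fun i ↦ by positivity) 0 (by positivity),
    ((summable_alphaExpansion_terms hα hd).tsum_le_tsum (alphaExpansion_term_le hα hd)
      hgeom.summable).trans hgeom.tsum_eq.le⟩

open Finset in
lemma alphaExpansion_mul_pow (hα : 1 < α) (hd : ∀ i, 1 ≤ d i) :
    alphaExpansion α d * α ^ d 0 = 1 + (α - 1) * alphaExpansion α (fun n ↦ d (n + 1)) := by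
  have hα₀ : α ≠ 0 := by positivity
  rw [alphaExpansion_eq_tsum, alphaExpansion_eq_tsum,
    (summable_alphaExpansion_terms hα hd).tsum_eq_zero_add, add_mul, ← tsum_mul_right,
    ← tsum_mul_left]
  congr 1
  · simp [hα₀]
  · refine tsum_congr fun i ↦ ?_
    rw [sum_range_succ' _ (i + 1), pow_add]
    field_simp
    ring

lemma firstDigit_alphaExpansion (hα : 1 < α) (hd : ∀ i, 1 ≤ d i) :
    firstDigit α (alphaExpansion α d) = d 0 := by
  refine firstDigit_eq_of_mul_pow_mem_Ioc hα (alphaExpansion_mem_Ioc hα hd).2 ?_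
  rw [alphaExpansion_mul_pow hα hd, ← sub_one_div_mem_Ioc_iff hα, add_sub_cancel_left,
    mul_div_cancel_left₀ _ (sub_pos.2 hα).ne']
  exact alphaExpansion_mem_Ioc hα fun i ↦ hd (i + 1)

lemma shift_alphaExpansion (hα : 1 < α) (hd : ∀ i, 1 ≤ d i) :
    shift α (alphaExpansion α d) = alphaExpansion α (fun n ↦ d (n + 1)) := by
  rw [shift, firstDigit_alphaExpansion hα hd, alphaExpansion_mul_pow hα hd, add_sub_cancel_left,
    mul_div_cancel_left₀ _ (sub_pos.2 hα).ne']

lemma digit_alphaExpansion (hα : 1 < α) (hd : ∀ i, 1 ≤ d i) (n : ℕ) :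
    digit α n (alphaExpansion α d) = d n := by
  induction n generalizing d with
  | zero => exact firstDigit_alphaExpansion hα hd
  | succ n ih =>
    rw [digit, Function.iterate_succ_apply, shift_alphaExpansion hα hd]
    exact ih fun i ↦ hd (i + 1)

end Expansion

lemma summable_sub_one_div_pow_mul_log (hα : 1 < α) :
    Summable fun k : ℕ ↦ (α - 1) / α ^ (k + 1) * Real.log (k + 1) := by
  have hα₁ : 0 ≤ α - 1 := by linarith
  have hr : ‖α⁻¹‖ < 1 := by
    rw [norm_inv, Real.norm_of_nonneg (by positivity)]
    exact inv_lt_one_of_one_lt₀ hα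
  have h : Summable fun k : ℕ ↦ ((k + 1 : ℕ) : ℝ) ^ 1 * α⁻¹ ^ (k + 1) :=
    (summable_nat_add_iff 1).2 (summable_pow_mul_geometric_of_norm_lt_one (R := ℝ) 1 hr)
  refine (h.mul_left (α - 1)).of_nonneg_of_le (fun k ↦ ?_) fun k ↦ ?_
  · have : (0 : ℝ) ≤ Real.log (k + 1) := Real.log_nonneg (by simp)
    positivity
  · calc (α - 1) / α ^ (k + 1) * Real.log (k + 1)
        ≤ (α - 1) / α ^ (k + 1) * (k + 1) :=
          mul_le_mul_of_nonneg_left (Real.log_le_self (by positivity)) (by positivity)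
      _ = (α - 1) * (((k + 1 : ℕ) : ℝ) ^ 1 * α⁻¹ ^ (k + 1)) := by
          rw [inv_pow]
          push_cast
          ring

lemma tprod_rpow_eq_exp_tsum (hα : 1 < α) :
    ∏' k : ℕ, ((k + 1 : ℝ)) ^ ((α - 1) / α ^ (k + 1))
      = Real.exp (∑' k : ℕ, (α - 1) / α ^ (k + 1) * Real.log (k + 1)) := by
  have hlog (k : ℕ) : Real.log (((k + 1 : ℝ)) ^ ((α - 1) / α ^ (k + 1)))
      = (α - 1) / α ^ (k + 1) * Real.log (k + 1) := Real.log_rpow (by positivity) _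
  simp_rw [← hlog]
  exact (Real.rexp_tsum_eq_tprod (fun k ↦ by positivity)
    (by simpa only [hlog] using summable_sub_one_div_pow_mul_log hα)).symm

section Measure

open ProbabilityTheory

local notation "μ" => volume.restrict (Ioc (0 : ℝ) 1)

lemma volume_preimage_mul_pow_sub_one_div (hα : 1 < α) (k : ℕ) (s : Set ℝ) :
    volume ((fun x ↦ (x * α ^ k - 1) / (α - 1)) ⁻¹' s)
      = ENNReal.ofReal ((α - 1) / α ^ k) * volume s := by
  have hα₁ : 0 < α - 1 := sub_pos.2 hα
  have h : (fun x ↦ (x * α ^ k - 1) / (α - 1)) = fun x ↦ α ^ k / (α - 1) * x + -(α - 1)⁻¹ := by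
    funext x
    field_simp
    ring
  rw [h, Real.volume_preimage_mul_add (by positivity), inv_div, abs_of_pos (by positivity)]

lemma firstDigit_preimage_inter_shift_preimage_inter_Ioc (hα : 1 < α) {k : ℕ} (hk : 1 ≤ k)
    (A : Set ℝ) : firstDigit α ⁻¹' {k} ∩ shift α ⁻¹' A ∩ Ioc 0 1
      = (fun x ↦ (x * α ^ k - 1) / (α - 1)) ⁻¹' (A ∩ Ioc 0 1) := by
  ext x
  simp only [mem_inter_iff, mem_preimage, mem_singleton_iff]
  constructor
  · rintro ⟨⟨hD, hA⟩, hx⟩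
    rw [shift, hD] at hA
    exact ⟨hA, hD ▸ shift_mem_Ioc hα hx⟩
  · rintro ⟨hA, hI⟩
    have hmem := (sub_one_div_mem_Ioc_iff hα).1 hI
    have hx₀ : 0 < x := pos_of_mul_pos_left (one_pos.trans hmem.1) (by positivity)
    have hx₁ : x ≤ 1 := by
      by_contra! h
      nlinarith [hmem.2, pow_le_pow_right₀ hα.le hk, pow_one α]
    have hD := firstDigit_eq_of_mul_pow_mem_Ioc hα hx₁ hmem
    exact ⟨⟨hD, by rwa [shift, hD]⟩, hx₀, hx₁⟩

lemma measure_firstDigit_preimage_inter_shift_preimage_of_one_le (hα : 1 < α) {k : ℕ}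
    (hk : 1 ≤ k) (A : Set ℝ) : μ (firstDigit α ⁻¹' {k} ∩ shift α ⁻¹' A)
      = ENNReal.ofReal ((α - 1) / α ^ k) * μ A := by
  rw [Measure.restrict_apply' measurableSet_Ioc, Measure.restrict_apply' measurableSet_Ioc,
    firstDigit_preimage_inter_shift_preimage_inter_Ioc hα hk,
    volume_preimage_mul_pow_sub_one_div hα]

lemma measure_firstDigit_preimage_singleton (hα : 1 < α) {k : ℕ} (hk : 1 ≤ k) :
    μ (firstDigit α ⁻¹' {k}) = ENNReal.ofReal ((α - 1) / α ^ k) := by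
  simpa using measure_firstDigit_preimage_inter_shift_preimage_of_one_le hα hk univ

lemma firstDigit_preimage_zero : firstDigit α ⁻¹' {0} = ∅ :=
  eq_empty_of_forall_notMem fun x hx ↦ (one_le_firstDigit (α := α) x).not_gt (by simp_all)

lemma measure_firstDigit_preimage_singleton_inter_shift_preimage (hα : 1 < α) (k : ℕ)
    (A : Set ℝ) : μ (firstDigit α ⁻¹' {k} ∩ shift α ⁻¹' A) = μ (firstDigit α ⁻¹' {k}) * μ A := by
  rcases Nat.eq_zero_or_pos k with rfl | hk
  · simp [firstDigit_preimage_zero]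
  · rw [measure_firstDigit_preimage_inter_shift_preimage_of_one_le hα hk,
      measure_firstDigit_preimage_singleton hα hk]

lemma measure_firstDigit_preimage_inter_shift_preimage (hα : 1 < α) (s : Set ℕ) (A : Set ℝ) :
    μ (firstDigit α ⁻¹' s ∩ shift α ⁻¹' A) = μ (firstDigit α ⁻¹' s) * μ A := by
  have h : (Measure.restrict μ (shift α ⁻¹' A)).map (firstDigit α)
      = μ A • Measure.map (firstDigit α) μ := by
    refine Measure.ext_iff_singleton.2 fun k ↦ ?_
    rw [Measure.smul_apply, Measure.map_apply measurable_firstDigit (measurableSet_singleton k),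
      Measure.map_apply measurable_firstDigit (measurableSet_singleton k),
      Measure.restrict_apply (measurable_firstDigit (measurableSet_singleton k)),
      measure_firstDigit_preimage_singleton_inter_shift_preimage hα, smul_eq_mul, mul_comm]
  have hs := DFunLike.congr_fun h s
  rwa [Measure.smul_apply, Measure.map_apply measurable_firstDigit (.of_discrete),
    Measure.map_apply measurable_firstDigit (.of_discrete),
    Measure.restrict_apply (measurable_firstDigit .of_discrete), smul_eq_mul, mul_comm] at hs

lemma measurePreserving_shift (hα : 1 < α) : MeasurePreserving (shift α) μ μ := by
  refine ⟨measurable_shift, Measure.ext fun A hA ↦ ?_⟩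
  simpa [Measure.map_apply measurable_shift hA] using
    measure_firstDigit_preimage_inter_shift_preimage hα univ A

lemma indepFun_firstDigit_shift (hα : 1 < α) : IndepFun (firstDigit α) (shift α) μ :=
  indepFun_iff_measure_inter_preimage_eq_mul.2 fun s t _ ht ↦ by
    rw [measure_firstDigit_preimage_inter_shift_preimage hα,
      (measurePreserving_shift hα).measure_preimage ht.nullMeasurableSet]

@[fun_prop]
lemma measurable_digit (n : ℕ) : Measurable (digit α n) :=
  measurable_firstDigit.comp (measurable_shift.iterate n)

lemma indepFun_digit (hα : 1 < α) {i j : ℕ} (hij : i < j) :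
    IndepFun (digit α i) (digit α j) μ := by
  obtain ⟨l, rfl⟩ := Nat.exists_eq_add_of_lt hij
  have hj : digit α (i + l + 1) = (digit α l ∘ shift α) ∘ (shift α)^[i] := by
    funext x
    simp only [digit, Function.comp_apply, ← Function.iterate_succ_apply,
      ← Function.iterate_add_apply]
    congr 2
    omega
  rw [hj]
  exact ((indepFun_firstDigit_shift hα).comp measurable_id
    (measurable_digit l)).comp_measurePreserving ((measurePreserving_shift hα).iterate i)
    measurable_firstDigit ((measurable_digit l).comp measurable_shift)

lemma identDistrib_digit (hα : 1 < α) (n : ℕ) : IdentDistrib (digit α n) (firstDigit α) μ μ where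
  aemeasurable_fst := (measurable_digit n).aemeasurable
  aemeasurable_snd := measurable_firstDigit.aemeasurable
  map_eq := by
    rw [show digit α n = firstDigit α ∘ (shift α)^[n] from rfl,
      ← Measure.map_map measurable_firstDigit (measurable_shift.iterate n),
      ((measurePreserving_shift hα).iterate n).map_eq]

lemma map_firstDigit (hα : 1 < α) : Measure.map (firstDigit α) μ
    = Measure.sum fun k : ℕ ↦ ENNReal.ofReal ((α - 1) / α ^ (k + 1)) • Measure.dirac (k + 1) := by
  refine Measure.ext_iff_singleton.2 fun m ↦ ?_
  rw [Measure.map_apply measurable_firstDigit (measurableSet_singleton m),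
    Measure.sum_apply _ (measurableSet_singleton m)]
  rcases m with _ | m
  · simp [firstDigit_preimage_zero]
  · rw [tsum_eq_single m fun i hi ↦ by simp [hi]]
    simp [measure_firstDigit_preimage_singleton hα (Nat.le_add_left 1 m)]

lemma integrable_log_map_firstDigit (hα : 1 < α) :
    Integrable (fun k : ℕ ↦ Real.log k) (Measure.map (firstDigit α) μ) := by
  rw [map_firstDigit hα, integrable_sum_dirac_iff fun _ ↦ ENNReal.ofReal_ne_top]
  refine (summable_sub_one_div_pow_mul_log hα).congr fun k ↦ ?_
  have hα₁ : 0 ≤ α - 1 := by linarith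
  have : (0 : ℝ) ≤ Real.log (k + 1) := Real.log_nonneg (by simp)
  rw [ENNReal.toReal_ofReal (by positivity), Real.norm_of_nonneg (by exact_mod_cast this)]
  push_cast
  rfl

lemma integrable_log_firstDigit (hα : 1 < α) :
    Integrable (fun x ↦ Real.log (firstDigit α x)) μ :=
  (integrable_map_measure measurable_from_nat.aestronglyMeasurable
    measurable_firstDigit.aemeasurable).1 (integrable_log_map_firstDigit hα)

lemma integral_log_firstDigit (hα : 1 < α) :
    ∫ x, Real.log (firstDigit α x) ∂μ = ∑' k : ℕ, (α - 1) / α ^ (k + 1) * Real.log (k + 1) := by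
  have hα₁ : 0 ≤ α - 1 := by linarith
  have h := integrable_log_map_firstDigit hα
  rw [map_firstDigit hα, integrable_sum_dirac_iff fun _ ↦ ENNReal.ofReal_ne_top] at h
  rw [← integral_map (f := fun k : ℕ ↦ Real.log k) measurable_firstDigit.aemeasurable
    measurable_from_nat.aestronglyMeasurable, map_firstDigit hα,
    integral_sum_dirac_eq_tsum (f := fun k : ℕ ↦ Real.log k) (fun _ ↦ ENNReal.ofReal_ne_top) h]
  refine tsum_congr fun k ↦ ?_
  rw [ENNReal.toReal_ofReal (by positivity), smul_eq_mul]
  push_cast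
  rfl

lemma ae_tendsto_mean_log_digit (hα : 1 < α) :
    ∀ᵐ x ∂μ, Tendsto (fun n : ℕ ↦ (∑ i ∈ Finset.range n, Real.log (digit α i x)) / n) atTop
      (nhds (∑' k : ℕ, (α - 1) / α ^ (k + 1) * Real.log (k + 1))) := by
  have hlog : Measurable fun k : ℕ ↦ Real.log k := measurable_from_nat
  have hindep : Pairwise fun i j ↦ IndepFun (fun x ↦ Real.log (digit α i x))
      (fun x ↦ Real.log (digit α j x)) μ := by
    intro i j hij
    rcases hij.lt_or_gt with h | h
    · exact (indepFun_digit hα h).comp hlog hlog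
    · exact ((indepFun_digit hα h).comp hlog hlog).symm
  have h := strong_law_ae_real (fun i x ↦ Real.log (digit α i x)) (integrable_log_firstDigit hα)
    hindep fun i ↦ (identDistrib_digit hα i).comp hlog
  rwa [show (fun x ↦ Real.log (digit α 0 x)) = fun x ↦ Real.log (firstDigit α x) from rfl,
    integral_log_firstDigit hα] at h

end Measure

end AlphaExpansion

theorem digit_geometric_mean_ae (α : ℝ) (hα : 1 < α) :
    ∀ᵐ x ∂(volume.restrict (Set.Ioc (0 : ℝ) 1)),
      ∀ d : ℕ → ℕ, (∀ i, 1 ≤ d i) → alphaExpansion α d = x →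
        Tendsto (fun n : ℕ => (∏ i ∈ Finset.range n, (d i : ℝ)) ^ (1 / (n : ℝ)))
          atTop (nhds (∏' e : ℕ, ((e + 1 : ℝ)) ^ ((α - 1) / α ^ (e + 1)))) ∧
        Tendsto (fun n : ℕ => (∑ i ∈ Finset.range n, Real.log (d i)) / n)
          atTop (nhds (∑' e : ℕ, (α - 1) * α ^ (-(e + 1 : ℤ)) * Real.log (e + 1))) := by
  have hmean : ∑' e : ℕ, (α - 1) * α ^ (-(e + 1 : ℤ)) * Real.log (e + 1)
      = ∑' k : ℕ, (α - 1) / α ^ (k + 1) * Real.log (k + 1) :=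
    tsum_congr fun e ↦ by rw [div_eq_mul_inv, ← zpow_natCast, ← zpow_neg]; push_cast; rfl
  filter_upwards [AlphaExpansion.ae_tendsto_mean_log_digit hα] with x hx d hd hdx
  subst hdx
  simp only [AlphaExpansion.digit_alphaExpansion hα hd] at hx
  rw [hmean, AlphaExpansion.tprod_rpow_eq_exp_tsum hα]
  refine ⟨?_, hx⟩
  have hpos : ∀ i, (0 : ℝ) < d i := fun i ↦ Nat.cast_pos.2 (hd i)
  simp only [Real.prod_rpow_one_div_eq_exp _ fun i _ ↦ hpos i]
  exact (Real.continuous_exp.tendsto _).comp hx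
end
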